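/- Let f be a monic complex polynomial of degree d ≥ 2 with M = max(1, |a_{d-1}|, ..., |a_0|) and R = max(2, M). Then for all z with |z| ≥ R, |f(z)| ≤ (|z| + R)^d − R, and by induction |f^n(z)| ≤ (|z| + R)^{d^n} − R for all n ≥ 1; consequently the escape-rate function satisfies G_f(z) ≤ log(max(|z|, R) + R) for all z ∈ ℂ, and max_{|w|=1} G_f(w) ≤ (1/d)·log M + 1. -/

import Mathlib

/-!
If `‖z‖ ≤ x` with `x ≥ R`, the triangle inequality gives `‖f z‖ ≤ x ^ d + d R x ^ (d - 1)`, and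
the terms `x ^ d`, `d R x ^ (d - 1)` and `R ^ d ≥ R` of the binomial expansion of `(x + R) ^ d`
dominate this plus `R`. The new bound `(x + R) ^ d - R` is again `≥ R`, so the estimate iterates
to `(x + R) ^ (d ^ n) - R`, and taking `d⁻ⁿ log` gives `G z ≤ log (x + R)`. On the unit circle
`‖f w‖ ≤ 1 + d M`, so `d G w = G (f w) ≤ log ((d + 3) M) ≤ log M + d`.
-/

open Filter Topology

theorem pow_add_mul_pow_add_pow_le_add_pow {x y : ℝ} (hx : 0 ≤ x) (hy : 0 ≤ y) {d : ℕ}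
    (hd : 2 ≤ d) : x ^ d + d * y * x ^ (d - 1) + y ^ d ≤ (x + y) ^ d := by
  have hsub : ({0, d - 1, d} : Finset ℕ) ⊆ Finset.range (d + 1) := by
    intro k hk
    simp only [Finset.mem_insert, Finset.mem_singleton] at hk
    rw [Finset.mem_range]; omega
  have hthree : ∑ k ∈ ({0, d - 1, d} : Finset ℕ), x ^ k * y ^ (d - k) * (d.choose k : ℝ) =
      x ^ d + d * y * x ^ (d - 1) + y ^ d := by
    rw [Finset.sum_insert (by simp only [Finset.mem_insert, Finset.mem_singleton]; omega),
      Finset.sum_insert (by simp only [Finset.mem_singleton]; omega), Finset.sum_singleton,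
      Nat.choose_self, Nat.choose_zero_right, Nat.choose_symm (by omega), Nat.choose_one_right,
      Nat.sub_self, Nat.sub_sub_self (by omega), Nat.sub_zero]
    push_cast; ring
  rw [add_pow, ← hthree]
  exact Finset.sum_le_sum_of_subset_of_nonneg hsub (fun k _ _ => by positivity)

section Polynomial

variable {𝕜 : Type*} [NormedDivisionRing 𝕜]

theorem norm_pow_add_sum_mul_pow_le {d : ℕ} {a : ℕ → 𝕜} {M x : ℝ} (ha : ∀ i < d, ‖a i‖ ≤ M)
    {z : 𝕜} (hz : ‖z‖ ≤ x) (hx : 1 ≤ x) :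
    ‖z ^ d + ∑ i ∈ Finset.range d, a i * z ^ i‖ ≤ x ^ d + d * M * x ^ (d - 1) := by
  have hterm : ∀ i ∈ Finset.range d, ‖a i * z ^ i‖ ≤ M * x ^ (d - 1) := by
    intro i hi
    have hi : i < d := Finset.mem_range.mp hi
    rw [norm_mul, norm_pow]
    have hzi : ‖z‖ ^ i ≤ x ^ (d - 1) :=
      (pow_le_pow_left₀ (norm_nonneg z) hz i).trans (pow_le_pow_right₀ hx (by omega))
    exact mul_le_mul (ha i hi) hzi (by positivity) ((norm_nonneg _).trans (ha i hi))
  calc ‖z ^ d + ∑ i ∈ Finset.range d, a i * z ^ i‖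
      ≤ ‖z‖ ^ d + ∑ i ∈ Finset.range d, ‖a i * z ^ i‖ :=
        (norm_add_le _ _).trans (by rw [norm_pow]; gcongr; exact norm_sum_le _ _)
    _ ≤ x ^ d + ∑ _i ∈ Finset.range d, M * x ^ (d - 1) := by gcongr with i hi; exact hterm i hi
    _ = x ^ d + d * M * x ^ (d - 1) := by simp [mul_assoc]

theorem norm_pow_add_sum_mul_pow_le_add_pow_sub {d : ℕ} (hd : 2 ≤ d) {a : ℕ → 𝕜} {R : ℝ}
    (ha : ∀ i < d, ‖a i‖ ≤ R) (hR : 1 ≤ R) {z : 𝕜} {x : ℝ} (hz : ‖z‖ ≤ x) (hx : R ≤ x) :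
    ‖z ^ d + ∑ i ∈ Finset.range d, a i * z ^ i‖ ≤ (x + R) ^ d - R := by
  have hRd : R ≤ R ^ d := le_self_pow₀ hR (by omega)
  have hnorm := norm_pow_add_sum_mul_pow_le ha hz (hR.trans hx)
  have hbinom := pow_add_mul_pow_add_pow_le_add_pow (by linarith : 0 ≤ x) (by linarith : 0 ≤ R) hd
  linarith

end Polynomial

section Iteration

variable {α : Type*} [Norm α]

theorem norm_iterate_le_add_pow_sub {f : α → α} {d : ℕ} {R : ℝ} (hd : 0 < d) (hR : 1 / 2 ≤ R)
    (hf : ∀ z x, ‖z‖ ≤ x → R ≤ x → ‖f z‖ ≤ (x + R) ^ d - R) (n : ℕ) :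
    ∀ {z : α} {x : ℝ}, ‖z‖ ≤ x → R ≤ x → ‖f^[n] z‖ ≤ (x + R) ^ (d ^ n) - R := by
  induction n with
  | zero => intro z x hz _; simpa using hz
  | succ n ih =>
    intro z x hz hx
    have hxR : x + R ≤ (x + R) ^ d := le_self_pow₀ (by linarith) hd.ne'
    have h := ih (hf z x hz hx) (by linarith)
    rwa [sub_add_cancel, ← pow_mul, ← pow_succ'] at h

/-- The escape rate `G_f z` is the limit of `escapeApprox f d z n` as `n → ∞`. -/
noncomputable def escapeApprox (f : α → α) (d : ℕ) (z : α) (n : ℕ) : ℝ :=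
  ((d : ℝ) ^ n)⁻¹ * Real.log (max 1 ‖f^[n] z‖)

theorem escapeApprox_apply {f : α → α} {d : ℕ} (hd : d ≠ 0) (z : α) (n : ℕ) :
    escapeApprox f d (f z) n = d * escapeApprox f d z (n + 1) := by
  have hd : (d : ℝ) ≠ 0 := Nat.cast_ne_zero.mpr hd
  simp only [escapeApprox, Function.iterate_succ_apply, pow_succ]
  field_simp

theorem tendsto_escapeApprox_apply {f : α → α} {d : ℕ} (hd : d ≠ 0) {z : α} {g : ℝ}
    (hg : Tendsto (escapeApprox f d z) atTop (𝓝 g)) :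
    Tendsto (escapeApprox f d (f z)) atTop (𝓝 (d * g)) := by
  simp only [funext (escapeApprox_apply hd z)]
  exact ((tendsto_add_atTop_iff_nat 1).mpr hg).const_mul _

theorem le_log_of_tendsto_escapeApprox {f : α → α} {d : ℕ} (hd : 0 < d) {z : α} {g B : ℝ}
    (hB : 1 ≤ B) (hg : Tendsto (escapeApprox f d z) atTop (𝓝 g))
    (hbound : ∀ n, ‖f^[n] z‖ ≤ B ^ (d ^ n)) : g ≤ Real.log B := by
  refine le_of_tendsto' hg fun n => ?_
  have hdn : (0 : ℝ) < (d : ℝ) ^ n := by positivity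
  calc escapeApprox f d z n ≤ ((d : ℝ) ^ n)⁻¹ * Real.log (B ^ (d ^ n)) := by
        unfold escapeApprox
        gcongr
        exact max_le (one_le_pow₀ hB) (hbound n)
    _ = Real.log B := by rw [Real.log_pow]; push_cast; field_simp

end Iteration

theorem Real.log_add_three_le {x : ℝ} (hx : 2 ≤ x) : Real.log (x + 3) ≤ x := by
  rw [Real.log_le_iff_le_exp (by linarith)]
  nlinarith [Real.quadratic_le_exp_of_nonneg (by linarith : 0 ≤ x)]

theorem le_div_mul_log_add_one_of_mul_le {d : ℕ} (hd : 2 ≤ d) {M R y g : ℝ} (hM : 1 ≤ M)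
    (hR : R = max 2 M) (hy : y ≤ 1 + d * M) (hg : d * g ≤ Real.log (max y R + R)) :
    g ≤ 1 / d * Real.log M + 1 := by
  have hd' : (2 : ℝ) ≤ d := by exact_mod_cast hd
  have hsum : max y R + R ≤ (d + 3) * M := by
    have hR2M : R ≤ 2 * M := hR ▸ max_le (by linarith) (by linarith)
    have : max y R ≤ 1 + d * M := max_le hy (by nlinarith)
    nlinarith
  have hlog : d * g ≤ Real.log M + d := calc
    d * g ≤ Real.log ((d + 3) * M) :=
      hg.trans (Real.log_le_log (by linarith [le_max_right y R, le_max_left 2 M]) hsum)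
    _ = Real.log (d + 3) + Real.log M := Real.log_mul (by linarith) (by linarith)
    _ ≤ Real.log M + d := by linarith [Real.log_add_three_le hd']
  rw [show (1 / (d : ℝ)) * Real.log M + 1 = (Real.log M + d) / d by field_simp,
    le_div_iff₀ (by linarith)]
  linarith

/-- growth bounds for a monic complex polynomial and the resulting
bounds on the escape-rate function, including on the unit circle. -/
theorem stmt18 (d : ℕ) (hd : 2 ≤ d) (a : ℕ → ℂ) (f : ℂ → ℂ)
    (hf : ∀ z, f z = z ^ d + ∑ i ∈ Finset.range d, a i * z ^ i)
    (M R : ℝ)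
    (hM : M = (Finset.range d).sup' (Finset.nonempty_range_iff.mpr (by omega))
      (fun i => max 1 ‖a i‖))
    (hR : R = max 2 M)
    (G : ℂ → ℝ)
    (hG : ∀ z : ℂ, Tendsto
      (fun n : ℕ => ((d : ℝ) ^ n)⁻¹ * Real.log (max 1 ‖f^[n] z‖))
      atTop (nhds (G z))) :
    (∀ z : ℂ, R ≤ ‖z‖ →
      ‖f z‖ ≤ (‖z‖ + R) ^ d - R) ∧
    (∀ z : ℂ, R ≤ ‖z‖ → ∀ n : ℕ, 1 ≤ n →
      ‖f^[n] z‖ ≤ (‖z‖ + R) ^ (d ^ n) - R) ∧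
    (∀ z : ℂ, G z ≤ Real.log (max ‖z‖ R + R)) ∧
    (∀ w : ℂ, ‖w‖ = 1 → G w ≤ (1 / d) * Real.log M + 1) := by
  have hle_sup : ∀ i < d, max 1 ‖a i‖ ≤ M := fun i hi =>
    hM ▸ Finset.le_sup' (fun i => max 1 ‖a i‖) (Finset.mem_range.mpr hi)
  have hM1 : 1 ≤ M := (le_max_left _ _).trans (hle_sup 0 (by omega))
  have haM : ∀ i < d, ‖a i‖ ≤ M := fun i hi => (le_max_right _ _).trans (hle_sup i hi)
  have hMR : M ≤ R := hR ▸ le_max_right _ _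
  have hR2 : 2 ≤ R := hR ▸ le_max_left _ _
  have hstep : ∀ z x, ‖z‖ ≤ x → R ≤ x → ‖f z‖ ≤ (x + R) ^ d - R := fun z x hz hx =>
    hf z ▸ norm_pow_add_sum_mul_pow_le_add_pow_sub hd (fun i hi => (haM i hi).trans hMR)
      (by linarith) hz hx
  have hiter := norm_iterate_le_add_pow_sub (by omega) (by linarith) hstep
  have hG_le : ∀ z, G z ≤ Real.log (max ‖z‖ R + R) := fun z =>
    le_log_of_tendsto_escapeApprox (by omega) (by linarith [le_max_right ‖z‖ R]) (hG z)
      fun n => (hiter n (le_max_left _ _) (le_max_right _ _)).trans (by linarith)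
  refine ⟨fun z hz => hstep z _ le_rfl hz, fun z hz n _ => hiter n le_rfl hz, hG_le,
    fun w hw => ?_⟩
  have hfw : ‖f w‖ ≤ 1 + d * M := by
    simpa [hf] using norm_pow_add_sum_mul_pow_le haM hw.le le_rfl
  have hGfw : G (f w) = d * G w :=
    tendsto_nhds_unique (hG (f w)) (tendsto_escapeApprox_apply (by omega) (hG w))
  exact le_div_mul_log_add_one_of_mul_le hd hM1 hR hfw (hGfw ▸ hG_le (f w))
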